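/- Let r ≥ 2 and let a : Fin 4 → ℕ satisfy a i < r for all i, r ∣ ∑ i, a i, not all a i are zero, (∑ i, a i)/r ≤ 1, and also (∑ i, b i)/r ≤ 1 where b i = 0 if a i = 0 and b i = r - a i otherwise. Then exactly two of the a i are zero. -/
import Mathlib


/-- If `g ∈ SU(4)` is a nontrivial element of finite order `r` such that both `g` and
`g⁻¹` have age at most `1`, then exactly two of the eigenvalue exponents `a i` vanish. -/
theorem two_exponents_vanish (r : ℕ) (hr : 2 ≤ r) (a : Fin 4 → ℕ)
    (ha : ∀ i, a i < r) (hdvd : r ∣ ∑ i, a i)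
    (hne : ¬ ∀ i, a i = 0)
    (hage : (∑ i, a i) / r ≤ 1)
    (b : Fin 4 → ℕ) (hb : ∀ i, b i = if a i = 0 then 0 else r - a i)
    (hage' : (∑ i, b i) / r ≤ 1) :
    (Finset.univ.filter fun i : Fin 4 => a i = 0).card = 2 := by
  have hrpos : 0 < r := by omega
  rw [Fin.sum_univ_four] at hage hage'
  obtain ⟨c, hc⟩ := hdvd
  rw [Fin.sum_univ_four] at hc
  have hne' : ¬(a 0 = 0 ∧ a 1 = 0 ∧ a 2 = 0 ∧ a 3 = 0) := by
    intro h
    exact hne fun i => by fin_cases i <;> simp [h.1, h.2.1, h.2.2.1, h.2.2.2]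
  have hpos : a 0 + a 1 + a 2 + a 3 ≠ 0 := fun h => hne' (by omega)
  have hsum : a 0 + a 1 + a 2 + a 3 = r := by
    have h1 : (a 0 + a 1 + a 2 + a 3) / r ≤ 1 := hage
    rw [hc, Nat.mul_div_cancel_left _ hrpos] at h1
    interval_cases c <;> omega
  have hbsum : b 0 + b 1 + b 2 + b 3 < 2 * r := by
    by_contra h
    have h2 : 2 ≤ (b 0 + b 1 + b 2 + b 3) / r := by
      rw [Nat.le_div_iff_mul_le hrpos]; omega
    omega
  rw [Finset.card_filter, Fin.sum_univ_four]
  have ha0 := ha 0; have ha1 := ha 1; have ha2 := ha 2; have ha3 := ha 3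
  have hb0 := hb 0; have hb1 := hb 1; have hb2 := hb 2; have hb3 := hb 3
  clear hne hne' hage hage' hc ha hb
  rcases eq_or_ne (a 0) 0 with h0 | h0 <;>
    rcases eq_or_ne (a 1) 0 with h1 | h1 <;>
      rcases eq_or_ne (a 2) 0 with h2 | h2 <;>
        rcases eq_or_ne (a 3) 0 with h3 | h3 <;>
    simp only [h0, h1, h2, h3, if_pos, if_neg, if_true, if_false, ite_true, ite_false,
      not_false_eq_true] at hb0 hb1 hb2 hb3 ⊢ <;> omega
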